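/- For the single-qubit selfcomplementary channel with Kraus operators K₁ = diag(sinθ, 1/√2), K₂ = [[0,1/√2],[cosθ,0]], the image of the maximally mixed state is Φ(1/2) = diag((1/2)sin²θ + 1/4, (1/2)cos²θ + 1/4), whose von Neumann entropy achieves its minimum over θ ∈ [0,π] at θ ∈ {0, π/2, π}, where Φ(1/2) = diag(1/4, 3/4) or diag(3/4, 1/4), with entropy S = −(1/4)log(1/4) − (3/4)log(3/4) ≈ 0.56233 (in bits, with log base 2); in particular S(Φ(1/2)) > (1/2)log 2 for all θ, so the lower bound (1/2)log N on the map entropy is not saturated for this family. -/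

import Mathlib

/-!
Both Kraus operators have real entries and are diagonal or antidiagonal, so `Φ(1/2)` is diagonal
with eigenvalues `q θ = sin²θ / 2 + 1/4 ∈ [1/4, 3/4]` and `1 - q θ`. Binary entropy is symmetric
about `1/2` and increasing on `[0, 1/2]`, so on `[1/4, 3/4]` it is minimal at the endpoints, where
it equals `2 - (3/4) log₂ 3 > 1/2` because `log₂ 3 < 2`.
-/

open Matrix

noncomputable section

/-- Kraus operator `K₁ = diag(sin θ, 1/√2)` (φ = 0). -/
def K1 (θ : ℝ) : Matrix (Fin 2) (Fin 2) ℂ :=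
  !![(Real.sin θ : ℂ), 0; 0, ((Real.sqrt 2)⁻¹ : ℝ)]

/-- Kraus operator `K₂ = [[0, 1/√2],[cos θ, 0]]` (φ = 0). -/
def K2 (θ : ℝ) : Matrix (Fin 2) (Fin 2) ℂ :=
  !![0, ((Real.sqrt 2)⁻¹ : ℝ); (Real.cos θ : ℂ), 0]

/-- The eigenvalue `(1/2)sin²θ + 1/4` of the image of the maximally mixed state. -/
def q (θ : ℝ) : ℝ := (Real.sin θ) ^ 2 / 2 + 1 / 4

/-- Binary (Shannon) entropy in bits. -/
def H2 (x : ℝ) : ℝ := -x * Real.logb 2 x - (1 - x) * Real.logb 2 (1 - x)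

lemma H2_eq_binEntropy_div_log (x : ℝ) : H2 x = Real.binEntropy x / Real.log 2 := by
  simp only [H2, Real.binEntropy, Real.logb, Real.log_inv]; ring

lemma H2_one_sub (x : ℝ) : H2 (1 - x) = H2 x := by
  simp only [H2_eq_binEntropy_div_log, Real.binEntropy_one_sub]

lemma monotoneOn_H2 : MonotoneOn H2 (Set.Icc 0 2⁻¹) := fun x hx y hy hxy => by
  simp only [H2_eq_binEntropy_div_log]
  gcongr
  exact Real.binEntropy_strictMonoOn.monotoneOn hx hy hxy

lemma H2_le_H2_of_le_of_le_one_sub {a x : ℝ} (ha : 0 ≤ a) (hax : a ≤ x) (hxa : x ≤ 1 - a) :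
    H2 a ≤ H2 x := by
  rcases le_total x 2⁻¹ with hx | hx
  · exact monotoneOn_H2 ⟨ha, by linarith⟩ ⟨by linarith, hx⟩ hax
  · rw [← H2_one_sub x]
    exact monotoneOn_H2 ⟨ha, by linarith⟩ ⟨by linarith, by linarith⟩ (by linarith)

lemma half_logb_two_lt_H2_quarter : (1 / 2 : ℝ) * Real.logb 2 2 < H2 (1 / 4) := by
  have hlogb_four : Real.logb 2 4 = 2 := by
    rw [show (4 : ℝ) = 2 ^ 2 by norm_num, Real.logb_pow, Real.logb_self_eq_one one_lt_two]
    norm_num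
  have hlogb_three : Real.logb 2 3 < 2 := by
    linarith [Real.logb_lt_logb one_lt_two (by norm_num : (0 : ℝ) < 3) (by norm_num : (3 : ℝ) < 4)]
  have hquarter : Real.logb 2 (1 / 4) = -2 := by
    rw [one_div, Real.logb_inv, hlogb_four]
  have hthree_quarters : Real.logb 2 (3 / 4) = Real.logb 2 3 - 2 := by
    rw [Real.logb_div (by norm_num) (by norm_num), hlogb_four]
  rw [H2, Real.logb_self_eq_one one_lt_two, show (1 : ℝ) - 1 / 4 = 3 / 4 by norm_num,
    hquarter, hthree_quarters]
  linarith

lemma diag_ofReal_mul_conjTranspose (a b : ℝ) :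
    !![(a : ℂ), 0; 0, (b : ℂ)] * !![(a : ℂ), 0; 0, (b : ℂ)]ᴴ
      = !![((a ^ 2 : ℝ) : ℂ), 0; 0, ((b ^ 2 : ℝ) : ℂ)] := by
  ext i j
  fin_cases i <;> fin_cases j <;> simp [Matrix.mul_apply, sq]

lemma antidiag_ofReal_mul_conjTranspose (a b : ℝ) :
    !![0, (a : ℂ); (b : ℂ), 0] * !![0, (a : ℂ); (b : ℂ), 0]ᴴ
      = !![((a ^ 2 : ℝ) : ℂ), 0; 0, ((b ^ 2 : ℝ) : ℂ)] := by
  ext i j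
  fin_cases i <;> fin_cases j <;> simp [Matrix.mul_apply, sq]

lemma inv_sqrt_two_sq : (Real.sqrt 2)⁻¹ ^ 2 = 1 / 2 := by
  rw [inv_pow, Real.sq_sqrt zero_le_two, one_div]

def channel (θ : ℝ) (ρ : Matrix (Fin 2) (Fin 2) ℂ) : Matrix (Fin 2) (Fin 2) ℂ :=
  K1 θ * ρ * (K1 θ)ᴴ + K2 θ * ρ * (K2 θ)ᴴ

lemma channel_smul_one (θ : ℝ) (c : ℂ) :
    channel θ (c • 1) = c • (K1 θ * (K1 θ)ᴴ + K2 θ * (K2 θ)ᴴ) := by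
  simp only [channel, Matrix.mul_smul, mul_one, Matrix.smul_mul, smul_add]

lemma channel_half_smul_one (θ : ℝ) :
    channel θ ((1 / 2 : ℂ) • 1)
      = !![((q θ : ℝ) : ℂ), 0; 0, (((Real.cos θ) ^ 2 / 2 + 1 / 4 : ℝ) : ℂ)] := by
  rw [channel_smul_one, K1, K2, diag_ofReal_mul_conjTranspose,
    antidiag_ofReal_mul_conjTranspose, inv_sqrt_two_sq]
  ext i j
  fin_cases i <;> fin_cases j <;> simp [q] <;> ring

lemma q_mem_Icc (θ : ℝ) : q θ ∈ Set.Icc (1 / 4) (3 / 4) := by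
  unfold q
  constructor <;> nlinarith [sq_nonneg (Real.sin θ), Real.sin_sq_le_one θ]

lemma q_zero : q 0 = 1 / 4 := by norm_num [q]

lemma q_pi : q Real.pi = 1 / 4 := by norm_num [q]

lemma q_pi_div_two : q (Real.pi / 2) = 3 / 4 := by norm_num [q]

theorem entropy_of_image_of_maximally_mixed_general (θ : ℝ) :
    K1 θ * ((1 / 2 : ℂ) • (1 : Matrix (Fin 2) (Fin 2) ℂ)) * (K1 θ)ᴴ
        + K2 θ * ((1 / 2 : ℂ) • (1 : Matrix (Fin 2) (Fin 2) ℂ)) * (K2 θ)ᴴ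
      = !![((q θ : ℝ) : ℂ), 0; 0, (((Real.cos θ) ^ 2 / 2 + 1 / 4 : ℝ) : ℂ)] ∧
    H2 (1 / 4) ≤ H2 (q θ) ∧
    ((θ = 0 ∨ θ = Real.pi / 2 ∨ θ = Real.pi) → H2 (q θ) = H2 (1 / 4)) ∧
    ((θ = 0 ∨ θ = Real.pi) → q θ = 1 / 4) ∧
    (θ = Real.pi / 2 → q θ = 3 / 4) ∧
    (1 / 2 : ℝ) * Real.logb 2 2 < H2 (q θ) := by
  have hq := q_mem_Icc θ
  have hmin : H2 (1 / 4) ≤ H2 (q θ) :=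
    H2_le_H2_of_le_of_le_one_sub (by norm_num) hq.1 (by linarith [hq.2])
  refine ⟨channel_half_smul_one θ, hmin, ?_, ?_, ?_, half_logb_two_lt_H2_quarter.trans_le hmin⟩
  · rintro (rfl | rfl | rfl)
    · rw [q_zero]
    · rw [q_pi_div_two, show (3 / 4 : ℝ) = 1 - 1 / 4 by norm_num, H2_one_sub]
    · rw [q_pi]
  · rintro (rfl | rfl)
    exacts [q_zero, q_pi]
  · rintro rfl
    exact q_pi_div_two

/-- For the single-qubit selfcomplementary channel, the image of the
maximally mixed state is `Φ(1/2) = diag((1/2)sin²θ + 1/4, (1/2)cos²θ + 1/4)`; its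
entropy (in bits) attains its minimum `H(1/4) = −(1/4)log(1/4) − (3/4)log(3/4)` over
`θ ∈ [0,π]` at `θ ∈ {0, π/2, π}` (where `Φ(1/2) = diag(1/4,3/4)` or `diag(3/4,1/4)`),
and it always exceeds `(1/2) log 2`, so the lower bound `(1/2) log N` on the map entropy
is not saturated for this family. -/
theorem entropy_of_image_of_maximally_mixed (θ : ℝ) (hθ : θ ∈ Set.Icc 0 Real.pi) :
    K1 θ * ((1 / 2 : ℂ) • (1 : Matrix (Fin 2) (Fin 2) ℂ)) * (K1 θ)ᴴ
        + K2 θ * ((1 / 2 : ℂ) • (1 : Matrix (Fin 2) (Fin 2) ℂ)) * (K2 θ)ᴴ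
      = !![((q θ : ℝ) : ℂ), 0; 0, (((Real.cos θ) ^ 2 / 2 + 1 / 4 : ℝ) : ℂ)] ∧
    H2 (1 / 4) ≤ H2 (q θ) ∧
    ((θ = 0 ∨ θ = Real.pi / 2 ∨ θ = Real.pi) → H2 (q θ) = H2 (1 / 4)) ∧
    ((θ = 0 ∨ θ = Real.pi) → q θ = 1 / 4) ∧
    (θ = Real.pi / 2 → q θ = 3 / 4) ∧
    (1 / 2 : ℝ) * Real.logb 2 2 < H2 (q θ) :=
  entropy_of_image_of_maximally_mixed_general θ

end
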